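/- arXiv:math/0306077 — 2 statements merged into one kernel-verified Lean document; each statement's English description precedes it below -/
import Mathlib

section
/- Let μ : ℂ* → ℂ be a holomorphic function and q a real number with q > 1 such that μ(qz) = q·μ(z) for all z ∈ ℂ*. Then μ is linear, i.e., there exists c ∈ ℂ with μ(z) = c·z for all z. -/
open Set Complex Function Filter Topology

/-- A holomorphic function `μ` on `ℂ \\ {0}` satisfying `μ(qz) = q·μ(z)`
for a fixed real `q > 1` is linear: `μ(z) = c·z`. -/
theorem stmt_0 (μ : ℂ → ℂ) (q : ℝ) (hq : 1 < q)
    (hdiff : DifferentiableOn ℂ μ {z : ℂ | z ≠ 0})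
    (heq : ∀ z : ℂ, z ≠ 0 → μ ((q : ℂ) * z) = (q : ℂ) * μ z) :
    ∃ c : ℂ, ∀ z : ℂ, z ≠ 0 → μ z = c * z := by
  have hq0 : (0:ℝ) < q := lt_trans one_pos hq
  have hqc : (q:ℂ) ≠ 0 := by exact_mod_cast hq0.ne'
  set g : ℂ → ℂ := fun z => μ z / z with hgdef
  have hg : DifferentiableOn ℂ g {z : ℂ | z ≠ 0} :=
    hdiff.div (differentiableOn_id) (fun z hz => hz)
  have hper : ∀ z : ℂ, z ≠ 0 → g ((q : ℂ) * z) = g z := by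
    intro z hz
    simp only [hgdef, heq z hz, mul_div_mul_left _ _ hqc]
  have hpow : ∀ n : ℤ, ∀ z : ℂ, z ≠ 0 → g ((q : ℂ) ^ n * z) = g z := by
    intro n
    induction n using Int.induction_on with
    | zero => intro z hz; simp
    | succ k ih =>
      intro z hz
      have : ((q:ℂ) ^ (k+1:ℤ) * z) = (q:ℂ) * ((q:ℂ)^(k:ℤ) * z) := by
        rw [zpow_add₀ hqc, zpow_one]; ring
      rw [this, hper _ (mul_ne_zero (zpow_ne_zero _ hqc) hz), ih z hz]
    | pred k ih =>
      intro z hz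
      have h1 : ((q:ℂ) ^ (-(k:ℤ)-1) * z) ≠ 0 := mul_ne_zero (zpow_ne_zero _ hqc) hz
      have : ((q:ℂ) ^ (-(k:ℤ)) * z) = (q:ℂ) * ((q:ℂ)^(-(k:ℤ)-1) * z) := by
        rw [← mul_assoc, ← zpow_one_add₀ hqc]; ring_nf
      rw [← ih z hz, this, hper _ h1]
  -- bound on annulus
  have hA : IsCompact {z : ℂ | 1 ≤ ‖z‖ ∧ ‖z‖ ≤ q} := by
    have : {z : ℂ | 1 ≤ ‖z‖ ∧ ‖z‖ ≤ q} =
        Metric.closedBall 0 q ∩ (Metric.ball 0 1)ᶜ := by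
      ext z; simp [Complex.norm_def, Metric.mem_closedBall, Metric.mem_ball,
        Complex.dist_eq, not_lt, and_comm]
    rw [this]
    exact (isCompact_closedBall 0 q).inter_right Metric.isOpen_ball.isClosed_compl
  have hAsub : {z : ℂ | 1 ≤ ‖z‖ ∧ ‖z‖ ≤ q} ⊆ {z : ℂ | z ≠ 0} := by
    intro z hz h0; rw [h0] at hz; simp at hz; linarith [hz.1]
  obtain ⟨M, hM⟩ := hA.exists_bound_of_continuousOn ((hg.continuousOn).mono hAsub)
  -- global bound
  have hbound : ∀ z : ℂ, z ≠ 0 → ‖g z‖ ≤ M := by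
    intro z hz
    have hr : 0 < ‖z‖ := by simpa [norm_pos_iff] using hz
    obtain ⟨n, hn1, hn2⟩ := exists_mem_Ico_zpow hr hq
    have hw : (q:ℂ) ^ (-n) * z ≠ 0 := mul_ne_zero (zpow_ne_zero _ hqc) hz
    have habs : ‖(q:ℂ)^(-n) * z‖ = q ^ (-n) * ‖z‖ := by
      simp [norm_zpow, Complex.norm_real, abs_of_pos hq0]
    have hmem : (q:ℂ)^(-n) * z ∈ {z : ℂ | 1 ≤ ‖z‖ ∧ ‖z‖ ≤ q} := by
      constructor
      · rw [habs, zpow_neg, inv_mul_eq_div, le_div_iff₀ (zpow_pos hq0 n), one_mul]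
        exact hn1
      · rw [habs, zpow_neg]
        rw [inv_mul_eq_div, div_le_iff₀ (zpow_pos hq0 n)]
        calc ‖z‖ ≤ q ^ (n+1) := le_of_lt hn2
        _ = q * q ^ n := by rw [zpow_add₀ hq0.ne', zpow_one]; ring
    calc ‖g z‖ = ‖g ((q:ℂ)^(-n) * z)‖ := by rw [hpow (-n) z hz]
    _ ≤ M := hM _ hmem
  -- removable singularity
  set F : ℂ → ℂ := update g 0 (limUnder (𝓝[≠] (0:ℂ)) g) with hF
  have hFd : DifferentiableOn ℂ F univ := by
    apply Complex.differentiableOn_update_limUnder_of_bddAbove (Filter.univ_mem)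
    · refine hg.mono ?_
      intro z hz; simpa using hz.2
    · refine ⟨M, ?_⟩
      rintro x ⟨z, hz, rfl⟩
      exact hbound z (by simpa using hz.2)
  have hFdiff : Differentiable ℂ F := fun z => (hFd z (mem_univ z)).differentiableAt
    (by simp [Filter.univ_mem])
  have hFb : Bornology.IsBounded (range F) := by
    apply isBounded_iff_forall_norm_le.2
    refine ⟨max M ‖F 0‖, ?_⟩
    rintro x ⟨z, rfl⟩
    by_cases hz : z = 0
    · rw [hz]; exact le_max_right _ _
    · have : F z = g z := by rw [hF, update_of_ne hz]
      rw [this]; exact le_trans (hbound z hz) (le_max_left _ _)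
  refine ⟨μ 1, ?_⟩
  intro z hz
  have h1 : F z = F 1 := hFdiff.apply_eq_apply_of_bounded hFb z 1
  have h2 : F z = g z := update_of_ne hz _ _
  have h3 : F 1 = g 1 := update_of_ne one_ne_zero _ _
  have : g z = g 1 := by rw [← h2, ← h3, h1]
  rw [hgdef] at this
  simp only [div_one] at this
  field_simp at this
  exact this.trans (mul_comm _ _)
end

section
/- Let A : V → V be an invertible linear operator on a finite-dimensional complex vector space V all of whose eigenvalues α satisfy |α| > 1. Then the cyclic group ⟨A⟩ ≅ ℤ acts freely and properly discontinuously on V \ {0}. -/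
set_option maxHeartbeats 1000000

theorem adapted_norm (n : ℕ) (A : (Fin n → ℂ) ≃ₗ[ℂ] (Fin n → ℂ))
    (hdiag : ⨆ μ : ℂ,
      Module.End.eigenspace (A : (Fin n → ℂ) →ₗ[ℂ] (Fin n → ℂ)) μ = ⊤)
    (hev : ∀ α ∈ spectrum ℂ (A : (Fin n → ℂ) →ₗ[ℂ] (Fin n → ℂ)), 1 < ‖α‖) :
    ∃ (N : (Fin n → ℂ) → ℝ) (c : ℝ), 1 < c ∧ Continuous N ∧
      (∀ w, 0 ≤ N w) ∧ (∀ w, w ≠ 0 → 0 < N w) ∧ (∀ w, c * N w ≤ N (A w)) := by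
  set f : Module.End ℂ (Fin n → ℂ) := (A : (Fin n → ℂ) →ₗ[ℂ] (Fin n → ℂ)) with hf
  have hInt : DirectSum.IsInternal (fun μ : ℂ => f.eigenspace μ) :=
    DirectSum.isInternal_submodule_of_iSupIndep_of_iSup_eq_top f.eigenspaces_iSupIndep hdiag
  let bas : ∀ μ : ℂ, Module.Basis (Module.Basis.ofVectorSpaceIndex ℂ (f.eigenspace μ)) ℂ (f.eigenspace μ) :=
    fun μ => Module.Basis.ofVectorSpace ℂ _
  let b := hInt.collectedBasis bas
  haveI : Fintype ((μ : ℂ) × Module.Basis.ofVectorSpaceIndex ℂ (f.eigenspace μ)) :=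
    FiniteDimensional.fintypeBasisIndex b
  rcases isEmpty_or_nonempty ((μ : ℂ) × Module.Basis.ofVectorSpaceIndex ℂ (f.eigenspace μ)) with hι | hι
  · -- trivial space
    have hzero : ∀ w : Fin n → ℂ, w = 0 := by
      intro w
      have h0 : b.repr w = 0 := Finsupp.ext fun i => isEmptyElim i
      have := congrArg b.repr.symm h0
      simpa using this
    refine ⟨fun _ => 0, 2, one_lt_two, continuous_const, fun w => le_refl 0,
      fun w hw => absurd (hzero w) hw, fun w => by simp⟩
  · have hb : ∀ i, f (b i) = i.1 • b i := fun i =>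
      Module.End.mem_eigenspace_iff.mp (hInt.collectedBasis_mem bas i)
    have key : ∀ (w : Fin n → ℂ) i, b.repr (f w) i = i.1 * b.repr w i := by
      intro w i
      have h1 : f w = ∑ j, (b.repr w j * j.1) • b j := by
        conv_lhs => rw [← b.sum_repr w]
        rw [map_sum]
        refine Finset.sum_congr rfl fun j _ => ?_
        rw [map_smul, hb j, smul_smul]
      rw [h1, map_sum, Finsupp.finset_sum_apply]
      simp only [map_smul, Module.Basis.repr_self, Finsupp.smul_apply, Finsupp.single_apply,
        smul_eq_mul]
      rw [Finset.sum_eq_single i]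
      · simp [mul_comm]
      · intro j _ hj; simp [hj]
      · intro h; exact absurd (Finset.mem_univ i) h
    have hcard : (Finset.univ : Finset ((μ : ℂ) × Module.Basis.ofVectorSpaceIndex ℂ
        (f.eigenspace μ))).Nonempty := Finset.univ_nonempty
    set c := Finset.univ.inf' hcard (fun i => ‖(i.1 : ℂ)‖) with hc
    have hc1 : 1 < c := by
      rw [hc, Finset.lt_inf'_iff]
      intro i _
      refine hev i.1 (Module.End.hasEigenvalue_iff_mem_spectrum.mp ?_)
      exact Module.End.hasEigenvalue_of_hasEigenvector
        ⟨hInt.collectedBasis_mem bas i, b.ne_zero i⟩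
    have hcle : ∀ i : (μ : ℂ) × Module.Basis.ofVectorSpaceIndex ℂ (f.eigenspace μ),
        c ≤ ‖(i.1 : ℂ)‖ := fun i => Finset.inf'_le _ (Finset.mem_univ i)
    have hcont : Continuous fun w : Fin n → ℂ => b.equivFun w :=
      LinearMap.continuous_of_finiteDimensional b.equivFun.toLinearMap
    refine ⟨fun w => ‖b.equivFun w‖, c, hc1, hcont.norm, fun w => norm_nonneg _, ?_, ?_⟩
    · intro w hw
      have : b.equivFun w ≠ 0 := fun h => hw (b.equivFun.map_eq_zero_iff.mp h)
      exact norm_pos_iff.mpr this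
    · intro w
      obtain ⟨j, hj⟩ := Finite.exists_max fun i => ‖b.equivFun w i‖
      have hxj : ‖b.equivFun w‖ ≤ ‖b.equivFun w j‖ :=
        (pi_norm_le_iff_of_nonneg (norm_nonneg _)).mpr hj
      have hyj : b.equivFun (A w) j = j.1 * b.equivFun w j := by
        simpa [Module.Basis.equivFun_apply, hf] using key w j
      calc c * ‖b.equivFun w‖ ≤ c * ‖b.equivFun w j‖ :=
            mul_le_mul_of_nonneg_left hxj (by linarith)
        _ ≤ ‖(j.1 : ℂ)‖ * ‖b.equivFun w j‖ :=
            mul_le_mul_of_nonneg_right (hcle j) (norm_nonneg _)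
        _ = ‖b.equivFun (A w) j‖ := by rw [hyj, norm_mul]
        _ ≤ ‖b.equivFun (A w)‖ := norm_le_pi_norm _ j

/-- an invertible, diagonalizable linear operator `A` on a finite-dimensional
complex vector space (here `ℂⁿ`) all of whose eigenvalues have absolute value `> 1`
generates a cyclic group `⟨A⟩ ≅ ℤ` acting freely and properly discontinuously on `V \ {0}`. -/
theorem stmt_3 (n : ℕ) (A : (Fin n → ℂ) ≃ₗ[ℂ] (Fin n → ℂ))
    (hdiag : ⨆ μ : ℂ,
      Module.End.eigenspace (A : (Fin n → ℂ) →ₗ[ℂ] (Fin n → ℂ)) μ = ⊤)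
    (hev : ∀ α ∈ spectrum ℂ (A : (Fin n → ℂ) →ₗ[ℂ] (Fin n → ℂ)), 1 < ‖α‖) :
    (∀ (m : ℤ) (v : Fin n → ℂ), v ≠ 0 → (A ^ m) v = v → m = 0) ∧
    (∀ v : Fin n → ℂ, v ≠ 0 → ∃ U ∈ nhds v,
      ∀ m : ℤ, m ≠ 0 → Disjoint ((A ^ m) '' U) U) := by
  obtain ⟨N, c, hc1, hNcont, hN0, hNpos, hstep⟩ := adapted_norm n A hdiag hev
  have hc0 : (0:ℝ) < c := lt_trans one_pos hc1
  -- growth along natural powers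
  have grow : ∀ (k : ℕ) (w : Fin n → ℂ), c ^ k * N w ≤ N ((A ^ k) w) := by
    intro k
    induction k with
    | zero => intro w; simp
    | succ k ih =>
      intro w
      have h1 : (A ^ (k + 1)) w = A ((A ^ k) w) := by
        rw [pow_succ']; rfl
      calc c ^ (k + 1) * N w = c * (c ^ k * N w) := by ring
        _ ≤ c * N ((A ^ k) w) := mul_le_mul_of_nonneg_left (ih w) hc0.le
        _ ≤ N (A ((A ^ k) w)) := hstep _
        _ = N ((A ^ (k + 1)) w) := by rw [h1]
  -- growth along positive integer powers
  have zgrow : ∀ m : ℤ, 0 < m → ∀ w : Fin n → ℂ, c * N w ≤ N ((A ^ m) w) := by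
    intro m hm w
    have hm' : m = (m.toNat : ℤ) := (Int.toNat_of_nonneg hm.le).symm
    have hk : m.toNat ≠ 0 := by omega
    have h1 : A ^ m = A ^ m.toNat := by rw [← zpow_natCast, ← hm']
    rw [h1]
    refine le_trans ?_ (grow m.toNat w)
    exact mul_le_mul_of_nonneg_right (le_self_pow₀ hc1.le hk) (hN0 w)
  have hinv : ∀ (m : ℤ) (w : Fin n → ℂ), (A ^ (-m)) ((A ^ m) w) = w := by
    intro m w
    rw [zpow_neg]
    exact (A ^ m).symm_apply_apply w
  constructor
  · -- freeness
    intro m v hv hfix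
    by_contra hm
    have hfree : ∀ p : ℤ, 0 < p → (A ^ p) v = v → False := by
      intro p hp hfixp
      have := zgrow p hp v
      rw [hfixp] at this
      nlinarith [hNpos v hv]
    rcases lt_trichotomy m 0 with hneg | rfl | hpos
    · have : (A ^ (-m)) v = v := by
        conv_lhs => rw [← hfix]
        exact hinv m v
      exact hfree (-m) (by omega) this
    · exact hm rfl
    · exact hfree m hpos hfix
  · -- proper discontinuity
    intro v hv
    have hNv : 0 < N v := hNpos v hv
    set s := Real.sqrt c with hs
    have hs1 : 1 < s := by
      rw [hs]
      have : (1:ℝ) < Real.sqrt c ↔ 1 ^ 2 < c := Real.lt_sqrt one_pos.le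
      simpa using this.mpr (by simpa using hc1)
    have hss : s * s = c := Real.mul_self_sqrt hc0.le
    refine ⟨{w | N v / s < N w ∧ N w < s * N v}, ?_, ?_⟩
    · have hopen : IsOpen {w : Fin n → ℂ | N v / s < N w ∧ N w < s * N v} :=
        (isOpen_lt continuous_const hNcont).inter (isOpen_lt hNcont continuous_const)
      refine hopen.mem_nhds ⟨?_, ?_⟩
      · exact div_lt_self hNv hs1
      · exact (lt_mul_iff_one_lt_left hNv).mpr hs1
    · -- key: positive powers push out of U
      have hout : ∀ p : ℤ, 0 < p → ∀ w ∈ {w | N v / s < N w ∧ N w < s * N v},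
          (A ^ p) w ∉ {w | N v / s < N w ∧ N w < s * N v} := by
        intro p hp w hw hmem
        have h1 : c * N w ≤ N ((A ^ p) w) := zgrow p hp w
        have h2 : N v / s < N w := hw.1
        have h3 : N ((A ^ p) w) < s * N v := hmem.2
        have hspos : 0 < s := lt_trans one_pos hs1
        -- c * (N v / s) = s * N v
        have : c * (N v / s) = s * N v := by
          field_simp
          nlinarith
        nlinarith
      intro m hm
      rw [Set.disjoint_left]
      rintro u ⟨w, hwU, rfl⟩ huU
      rcases lt_trichotomy m 0 with hneg | rfl | hpos
      · refine hout (-m) (by omega) _ huU ?_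
        rw [hinv m w]
        exact hwU
      · exact hm rfl
      · exact hout m hpos w hwU huU
end
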